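/- First integrability condition (equation (6), flat space). Let n ≥ 3, and let W_{abcd} (twice continuously differentiable) and L_{abc} (three times continuously differentiable, with L_{abc} = L_{[ab]c} and L_{ab}^{b} = 0) be tensor fields on flat ℝⁿ satisfying equation (5). Then W^{[ab}_{[cd;e]}^{f]} = −(4/(n−2)) δ^{[a}_{[c} ( L^{b|i|}_{d;|i|e]}^{f]} + L_{d}^{|i|b}_{;|i|e]}^{f]} ), where the antisymmetrizations are over the upper indices a, b, f and the lower indices c, d, e. -/

import Mathlib

/-!
Differentiating (5) twice writes `W_{abcd;ef}` as a fixed linear expression in the third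
partial derivatives `L_{pqr;jef}`, which are symmetric in `j e f`. After antisymmetrizing
over `[a b f]` and `[c d e]`, the terms `L_{abc;d e f}` and `L_{cda;b e f}` of
`2 L_{ab[c;d]} + 2 L_{cd[a;b]}` die, since each has two of its three derivative indices in one
antisymmetrized triple. The trace terms survive, with the inner `δ^{[a}_{[c}` antisymmetrization
absorbed by the outer one.
-/

open scoped ContDiff

noncomputable section

/-- Partial derivative `∂ᵢ f` of a scalar field on flat `ℝⁿ` (points represented as
`Fin n → ℝ`, standard coordinates) in the `i`-th coordinate direction.  In Cartesian
coordinates on flat space this is the covariant derivative `;i`. -/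
def pd {n : ℕ} (i : Fin n) (f : (Fin n → ℝ) → ℝ) : (Fin n → ℝ) → ℝ :=
  fun x => fderiv ℝ f x (Pi.single i 1)

/-- Components `η_{ab}` of the constant diagonal metric with diagonal entries `η a = ±1`;
since the entries are `±1` these coincide with the components `η^{ab}` of the inverse
metric. -/
def gm {n : ℕ} (η : Fin n → ℝ) (a b : Fin n) : ℝ := if a = b then η a else 0

/-- Antisymmetrization over two index slots. -/
def asym2 {n : ℕ} (T : Fin n → Fin n → ℝ) (a b : Fin n) : ℝ := (T a b - T b a) / 2

/-- Antisymmetrization over three index slots. -/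
def asym3 {n : ℕ} (T : Fin n → Fin n → Fin n → ℝ) (a b c : Fin n) : ℝ :=
  (T a b c - T a c b - T b a c + T b c a + T c a b - T c b a) / 6

/-- Simultaneous antisymmetrization over a pair of upper slots and a pair of lower slots. -/
def asym22 {n : ℕ} (T : Fin n → Fin n → Fin n → Fin n → ℝ) (a b c d : Fin n) : ℝ :=
  (T a b c d - T b a c d - T a b d c + T b a d c) / 4

/-- Simultaneous antisymmetrization over a triple of upper slots and a triple of lower
slots (arguments ordered as `T upper₁ upper₂ upper₃ lower₁ lower₂ lower₃`). -/
def asym33 {n : ℕ} (T : Fin n → Fin n → Fin n → Fin n → Fin n → Fin n → ℝ)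
    (a b f c d e : Fin n) : ℝ :=
  asym3 (fun a b f => asym3 (fun c d e => T a b f c d e) c d e) a b f

/-- A Weyl candidate: a 4-tensor field with the index symmetries (3a)–(3d):
antisymmetry in the first and in the second index pair, symmetry under interchange of the
two pairs, vanishing cyclic sum `W_{a[bcd]} = 0`, and vanishing trace `W^a{}_{bad} = 0`
(the trace being taken with the metric `η`). -/
def WeylCandidate {n : ℕ} (η : Fin n → ℝ)
    (W : (Fin n → ℝ) → Fin n → Fin n → Fin n → Fin n → ℝ) : Prop :=
  (∀ x a b c d, W x a b c d = - W x b a c d) ∧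
  (∀ x a b c d, W x a b c d = - W x a b d c) ∧
  (∀ x a b c d, W x a b c d = W x c d a b) ∧
  (∀ x a b c d, asym3 (fun b c d => W x a b c d) b c d = 0) ∧
  (∀ x b d, ∑ a, η a * W x a b a d = 0)

/-- The right-hand side of the Lanczos potential equation (4), in the equivalent fully
lowered form (the free indices `a b`, raised in the paper, are lowered with the invertible
diagonal metric `η`, which only multiplies each component equation by `η a * η b ≠ 0`).
Each contracted (dummy) index pair carries a factor `η i` coming from the inverse
metric. -/
def rhs4 {n : ℕ} (η : Fin n → ℝ) (L : (Fin n → ℝ) → Fin n → Fin n → Fin n → ℝ)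
    (x : Fin n → ℝ) (a b c d : Fin n) : ℝ :=
  -- 2 L^{ab}{}_{[c;d]}
  (pd d (L · a b c) x - pd c (L · a b d) x)
  -- + 2 L_{cd}{}^{[a;b]}
  + (pd b (L · c d a) x - pd a (L · c d b) x)
  -- − (4/(n−2)) δ^{[a}_{[c} ( L^{b]i}{}_{d];i} − L^{b]i}{}_{|i|;d]} + L_{d]i}{}^{b];i} − L_{d]i}{}^{|i|;b]} )
  - (4 / ((n : ℝ) - 2)) *
      asym22 (fun a b c d =>
        gm η a c *
          ∑ i, η i *
            (pd i (L · b i d) x - pd d (L · b i i) x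
              + pd i (L · d i b) x - pd b (L · d i i) x)) a b c d
  -- + (8/((n−2)(n−1))) δ^{a}_{[c} δ^{b}_{d]} L^{ij}{}_{i;j}
  + (8 / (((n : ℝ) - 2) * ((n : ℝ) - 1))) *
      ((gm η a c * gm η b d - gm η a d * gm η b c) / 2) *
      ∑ i, ∑ j, η i * η j * pd j (L · i j i) x

/-- Equation (4): `L` is a Lanczos potential for `W` (fully lowered, equivalent form). -/
def Eq4 {n : ℕ} (η : Fin n → ℝ)
    (W : (Fin n → ℝ) → Fin n → Fin n → Fin n → Fin n → ℝ)
    (L : (Fin n → ℝ) → Fin n → Fin n → Fin n → ℝ) : Prop :=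
  ∀ x a b c d, W x a b c d = rhs4 η L x a b c d

/-- The right-hand side of equation (5) (equation (4) in the Lanczos algebraic gauge
`L_{ab}{}^b = 0`), fully lowered form:
`2 L^{ab}{}_{[c;d]} + 2 L_{cd}{}^{[a;b]} − (4/(n−2)) δ^{[a}_{[c} ( L^{b]i}{}_{d];i} + L_{d]i}{}^{b];i} )`. -/
def rhs5 {n : ℕ} (η : Fin n → ℝ) (L : (Fin n → ℝ) → Fin n → Fin n → Fin n → ℝ)
    (x : Fin n → ℝ) (a b c d : Fin n) : ℝ :=
  (pd d (L · a b c) x - pd c (L · a b d) x)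
  + (pd b (L · c d a) x - pd a (L · c d b) x)
  - (4 / ((n : ℝ) - 2)) *
      asym22 (fun a b c d =>
        gm η a c * ∑ i, η i * (pd i (L · b i d) x + pd i (L · d i b) x)) a b c d

/-- Equation (5). -/
def Eq5 {n : ℕ} (η : Fin n → ℝ)
    (W : (Fin n → ℝ) → Fin n → Fin n → Fin n → Fin n → ℝ)
    (L : (Fin n → ℝ) → Fin n → Fin n → Fin n → ℝ) : Prop :=
  ∀ x a b c d, W x a b c d = rhs5 η L x a b c d

/-- Constraint (8), fully lowered form:
`W^{[ab}{}_{[cd;e]}{}^{f]} = (1/(n−4)) δ^{[a}_{[c} W^{bf]}{}_{de];i}{}^{i}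
 + (2/(n−4)) δ^{[a}_{[c} W^{|i|b}{}_{de];i}{}^{f]} + (2/(n−4)) δ^{[a}_{[c} W^{bf]}{}_{|i|d;e]}{}^{i}
 + (4/((n−3)(n−4))) δ^{[a}_{[c} δ^{b}_{d} W^{f]i}{}_{e]j;i}{}^{j}`. -/
def Constraint8 {n : ℕ} (η : Fin n → ℝ)
    (W : (Fin n → ℝ) → Fin n → Fin n → Fin n → Fin n → ℝ) : Prop :=
  ∀ x a b f c d e,
    asym33 (fun a b f c d e => pd f (pd e (W · a b c d)) x) a b f c d e =
      (1 / ((n : ℝ) - 4)) *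
          asym33 (fun a b f c d e =>
            gm η a c * ∑ i, η i * pd i (pd i (W · b f d e)) x) a b f c d e
      + (2 / ((n : ℝ) - 4)) *
          asym33 (fun a b f c d e =>
            gm η a c * ∑ i, η i * pd f (pd i (W · i b d e)) x) a b f c d e
      + (2 / ((n : ℝ) - 4)) *
          asym33 (fun a b f c d e =>
            gm η a c * ∑ i, η i * pd i (pd e (W · b f i d)) x) a b f c d e
      + (4 / (((n : ℝ) - 3) * ((n : ℝ) - 4))) *
          asym33 (fun a b f c d e =>
            gm η a c * gm η b d *
              ∑ i, ∑ j, η i * η j * pd j (pd i (W · f i e j)) x) a b f c d e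

/-- Constraint (10), fully lowered form:
`W^{[ab}{}_{cd;i}{}^{|i|e]} + 2 W^{[ab}{}_{i[c;d]}{}^{|i|e]}
 + (4/(n−3)) δ^{[a}_{[c} W^{b|i}{}_{d]j;i}{}^{j|e]} = 0`,
antisymmetrized over the upper indices `a b e` and (where indicated) the lower indices
`c d`. -/
def Constraint10 {n : ℕ} (η : Fin n → ℝ)
    (W : (Fin n → ℝ) → Fin n → Fin n → Fin n → Fin n → ℝ) : Prop :=
  ∀ x a b e c d,
    asym3 (fun a b e =>
      (∑ i, η i * pd e (pd i (pd i (W · a b c d))) x)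
      + 2 * asym2 (fun c d =>
            ∑ i, η i * pd e (pd i (pd d (W · a b i c))) x) c d
      + (4 / ((n : ℝ) - 3)) * asym2 (fun c d =>
            gm η a c *
              ∑ i, ∑ j, η i * η j * pd e (pd j (pd i (W · b i d j))) x) c d) a b e
    = 0

open Finset

section Calculus

variable {n : ℕ}

lemma contDiff_pd {k m : WithTop ℕ∞} {f : (Fin n → ℝ) → ℝ} (hf : ContDiff ℝ k f)
    (hmk : m + 1 ≤ k) (i : Fin n) : ContDiff ℝ m (pd i f) := by
  have hf' : ContDiff ℝ m (fderiv ℝ f) := hf.fderiv_right hmk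
  exact (ContinuousLinearMap.apply ℝ ℝ (Pi.single i 1)).contDiff.comp hf'

lemma pd_comm {f : (Fin n → ℝ) → ℝ} (hf : ContDiff ℝ 2 f) (i j : Fin n) (x : Fin n → ℝ) :
    pd i (pd j f) x = pd j (pd i f) x := by
  have hdiff : DifferentiableAt ℝ (fderiv ℝ f) x :=
    (hf.fderiv_right (m := 1) le_rfl).differentiable one_ne_zero x
  have hsymm := hf.contDiffAt.isSymmSndFDerivAt (x := x)
    (by simp [minSmoothness_of_isRCLikeNormedField])
  have hpd : ∀ u v : Fin n → ℝ,
      fderiv ℝ (fun y => fderiv ℝ f y v) x u = fderiv ℝ (fderiv ℝ f) x u v := by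
    intro u v
    rw [fderiv_clm_apply hdiff (differentiableAt_const v)]
    simp
  show fderiv ℝ (fun y => fderiv ℝ f y (Pi.single j 1)) x (Pi.single i 1)
    = fderiv ℝ (fun y => fderiv ℝ f y (Pi.single i 1)) x (Pi.single j 1)
  rw [hpd, hpd, hsymm]

lemma pd_linearMap_apply {ι : Type*} [Fintype ι] (Φ : (ι → ℝ) →ₗ[ℝ] ℝ)
    {g : ι → (Fin n → ℝ) → ℝ} {x : Fin n → ℝ} (hg : ∀ k, DifferentiableAt ℝ (g k) x)
    (i : Fin n) : pd i (fun y => Φ (fun k => g k y)) x = Φ (fun k => pd i (g k) x) := by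
  have hΦ : HasFDerivAt (fun y => Φ (fun k => g k y))
      ((LinearMap.toContinuousLinearMap Φ).comp
        (ContinuousLinearMap.pi fun k => fderiv ℝ (g k) x)) x :=
    (LinearMap.toContinuousLinearMap Φ).hasFDerivAt.comp x
      (hasFDerivAt_pi.2 fun k => (hg k).hasFDerivAt)
  simp [pd, hΦ.fderiv]

end Calculus

section Antisymmetrization

variable {n : ℕ}

lemma asym3_eq_zero_of_swap23 {T : Fin n → Fin n → Fin n → ℝ}
    (h : ∀ a b c, T a b c = T a c b) (a b c : Fin n) : asym3 T a b c = 0 := by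
  rw [asym3, h a b c, h b a c, h c a b]; ring

lemma asym3_eq_zero_of_swap13 {T : Fin n → Fin n → Fin n → ℝ}
    (h : ∀ a b c, T a b c = T c b a) (a b c : Fin n) : asym3 T a b c = 0 := by
  rw [asym3, h a b c, h a c b, h b a c]; ring

variable {T S : Fin n → Fin n → Fin n → Fin n → Fin n → Fin n → ℝ} {a b f c d e : Fin n}

lemma asym33_eq_zero_of_upper_swap23 (h : ∀ a b f c d e, T a b f c d e = T a f b c d e) :
    asym33 T a b f c d e = 0 :=
  asym3_eq_zero_of_swap23 (fun a b f => by simp only [h a b f]) a b f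

lemma asym33_eq_zero_of_upper_swap13 (h : ∀ a b f c d e, T a b f c d e = T f b a c d e) :
    asym33 T a b f c d e = 0 :=
  asym3_eq_zero_of_swap13 (fun a b f => by simp only [h a b f]) a b f

lemma asym33_eq_zero_of_lower_swap23 (h : ∀ a b f c d e, T a b f c d e = T a b f c e d) :
    asym33 T a b f c d e = 0 := by
  have hlower : ∀ a b f, asym3 (T a b f) c d e = 0 :=
    fun a b f => asym3_eq_zero_of_swap23 (h a b f) c d e
  simp only [asym33, hlower]
  simp [asym3]

lemma asym33_eq_zero_of_lower_swap13 (h : ∀ a b f c d e, T a b f c d e = T a b f e d c) :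
    asym33 T a b f c d e = 0 := by
  have hlower : ∀ a b f, asym3 (T a b f) c d e = 0 :=
    fun a b f => asym3_eq_zero_of_swap13 (h a b f) c d e
  simp only [asym33, hlower]
  simp [asym3]

lemma asym33_add : asym33 (fun a b f c d e => T a b f c d e + S a b f c d e) a b f c d e =
    asym33 T a b f c d e + asym33 S a b f c d e := by
  simp only [asym33, asym3]; ring

lemma asym33_sub : asym33 (fun a b f c d e => T a b f c d e - S a b f c d e) a b f c d e =
    asym33 T a b f c d e - asym33 S a b f c d e := by
  simp only [asym33, asym3]; ring

lemma asym33_const_mul (r : ℝ) :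
    asym33 (fun a b f c d e => r * T a b f c d e) a b f c d e = r * asym33 T a b f c d e := by
  simp only [asym33, asym3]; ring

lemma asym33_asym22 :
    asym33 (fun a b f c d e => asym22 (fun a b c d => T a b c d e f) a b c d) a b f c d e
      = asym33 (fun a b f c d e => T a b c d e f) a b f c d e := by
  simp only [asym33, asym3, asym22]; ring

end Antisymmetrization

section LanczosEquation

variable {n : ℕ} (η : Fin n → ℝ)

/-- `M (j, a, b, c)` stands for `L_{abc;j}`. -/
def rhs5Jet (a b c d : Fin n) : (Fin n × Fin n × Fin n × Fin n → ℝ) →ₗ[ℝ] ℝ where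
  toFun M := (M (d, a, b, c) - M (c, a, b, d)) + (M (b, c, d, a) - M (a, c, d, b))
    - 4 / ((n : ℝ) - 2) *
      asym22 (fun a b c d => gm η a c * ∑ i, η i * (M (i, b, i, d) + M (i, d, i, b))) a b c d
  map_add' M M' := by
    simp only [asym22, Pi.add_apply, mul_add, sum_add_distrib]; ring
  map_smul' r M := by
    simp only [asym22, Pi.smul_apply, smul_eq_mul, RingHom.id_apply, ← mul_add,
      mul_left_comm (η _) r, ← mul_sum]
    ring

lemma asym33_rhs5Jet (N : Fin n → Fin n → Fin n → Fin n → Fin n → Fin n → ℝ)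
    (h₁₂ : ∀ f e j, N f e j = N e f j) (h₂₃ : ∀ f e j, N f e j = N f j e)
    (a b f c d e : Fin n) :
    asym33 (fun a b f c d e => rhs5Jet η a b c d (fun k => N f e k.1 k.2.1 k.2.2.1 k.2.2.2))
        a b f c d e =
      -(4 / ((n : ℝ) - 2)) *
        asym33 (fun a b f c d e =>
          gm η a c * ∑ i, η i * (N f e i b i d + N f e i d i b)) a b f c d e := by
  have h₁₃ : ∀ f e j, N f e j = N j e f := fun f e j => by rw [h₁₂, h₂₃, h₁₂]
  simp only [rhs5Jet, LinearMap.coe_mk, AddHom.coe_mk, asym33_sub, asym33_add,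
    asym33_const_mul, asym33_asym22]
  rw [asym33_eq_zero_of_lower_swap23 fun _ _ f _ d e => by rw [h₂₃ f d e],
    asym33_eq_zero_of_lower_swap13 fun _ _ f c _ e => by rw [h₂₃ f c e],
    asym33_eq_zero_of_upper_swap23 fun _ b f _ _ _ => by rw [h₁₃ f _ b],
    asym33_eq_zero_of_upper_swap13 fun a _ f _ _ _ => by rw [h₁₃ f _ a]]
  ring

lemma rhs5_eq_rhs5Jet (L : (Fin n → ℝ) → Fin n → Fin n → Fin n → ℝ) (x : Fin n → ℝ)
    (a b c d : Fin n) :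
    rhs5 η L x a b c d = rhs5Jet η a b c d (fun k => pd k.1 (L · k.2.1 k.2.2.1 k.2.2.2) x) :=
  rfl

lemma pd_pd_rhs5 {L : (Fin n → ℝ) → Fin n → Fin n → Fin n → ℝ}
    (hL : ∀ a b c, ContDiff ℝ 3 (fun x => L x a b c)) (e f a b c d : Fin n) (x : Fin n → ℝ) :
    pd f (pd e (rhs5 η L · a b c d)) x =
      rhs5Jet η a b c d (fun k => pd f (pd e (pd k.1 (L · k.2.1 k.2.2.1 k.2.2.2))) x) := by
  have hd₁ : ∀ (j a b c : Fin n), Differentiable ℝ (pd j (L · a b c)) := fun j a b c =>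
    (contDiff_pd (hL a b c) (m := 2) (by norm_num) j).differentiable (by norm_num)
  have hd₂ : ∀ (j a b c : Fin n), Differentiable ℝ (pd e (pd j (L · a b c))) := fun j a b c =>
    (contDiff_pd (contDiff_pd (hL a b c) (m := 2) (by norm_num) j) (m := 1) (by norm_num)
      e).differentiable (by norm_num)
  simp only [rhs5_eq_rhs5Jet]
  have hpd_e :
      pd e (fun y => rhs5Jet η a b c d (fun k => pd k.1 (L · k.2.1 k.2.2.1 k.2.2.2) y)) =
        fun y => rhs5Jet η a b c d (fun k => pd e (pd k.1 (L · k.2.1 k.2.2.1 k.2.2.2)) y) :=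
    funext fun y =>
      pd_linearMap_apply (rhs5Jet η a b c d) (fun k => hd₁ k.1 k.2.1 k.2.2.1 k.2.2.2 y) e
  rw [hpd_e]
  exact pd_linearMap_apply (rhs5Jet η a b c d) (fun k => hd₂ k.1 k.2.1 k.2.2.1 k.2.2.2 x) f

end LanczosEquation

theorem first_integrability_condition_general
    (n : ℕ) (η : Fin n → ℝ)
    (W : (Fin n → ℝ) → Fin n → Fin n → Fin n → Fin n → ℝ)
    (L : (Fin n → ℝ) → Fin n → Fin n → Fin n → ℝ)
    (hLC3 : ∀ a b c, ContDiff ℝ 3 (fun x => L x a b c))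
    (hEq5 : Eq5 η W L) :
    ∀ x a b f c d e,
      asym33 (fun a b f c d e => pd f (pd e (W · a b c d)) x) a b f c d e =
        -(4 / ((n : ℝ) - 2)) *
          asym33 (fun a b f c d e =>
            gm η a c *
              ∑ i, η i *
                (pd f (pd e (pd i (L · b i d))) x
                  + pd f (pd e (pd i (L · d i b))) x)) a b f c d e := by
  intro x
  have hW : ∀ a b c d, (W · a b c d) = (rhs5 η L · a b c d) :=
    fun a b c d => funext fun y => hEq5 y a b c d
  have hC2 : ∀ j a b c, ContDiff ℝ 2 (pd j (L · a b c)) :=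
    fun j a b c => contDiff_pd (hLC3 a b c) (by norm_num) j
  simp only [hW, pd_pd_rhs5 η hLC3]
  refine asym33_rhs5Jet η (fun f e j a b c => pd f (pd e (pd j (L · a b c))) x) ?_ ?_
  · intro f e j
    funext a b c
    exact pd_comm (hC2 j a b c) f e x
  · intro f e j
    funext a b c
    congr 1
    exact funext (pd_comm ((hLC3 a b c).of_le (by norm_num)) e j)

/-- **First integrability condition (equation (6), flat space).**  If `W` (`C²`) and `L`
(`C³`, `L_{abc} = L_{[ab]c}`, `L_{ab}{}^b = 0`) satisfy equation (5) on flat `ℝⁿ`, then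
`W^{[ab}{}_{[cd;e]}{}^{f]}
  = −(4/(n−2)) δ^{[a}_{[c} ( L^{b|i|}{}_{d;|i|e]}{}^{f]} + L_{d}{}^{|i|b}{}_{;|i|e]}{}^{f]} )`. -/
theorem first_integrability_condition
    (n : ℕ) (hn : 3 ≤ n) (η : Fin n → ℝ) (hη : ∀ i, η i = 1 ∨ η i = -1)
    (W : (Fin n → ℝ) → Fin n → Fin n → Fin n → Fin n → ℝ)
    (hWC2 : ∀ a b c d, ContDiff ℝ 2 (fun x => W x a b c d))
    (L : (Fin n → ℝ) → Fin n → Fin n → Fin n → ℝ)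
    (hLC3 : ∀ a b c, ContDiff ℝ 3 (fun x => L x a b c))
    (hLasym : ∀ x a b c, L x a b c = - L x b a c)
    (hgauge : ∀ x a, ∑ b, η b * L x a b b = 0)
    (hEq5 : Eq5 η W L) :
    ∀ x a b f c d e,
      asym33 (fun a b f c d e => pd f (pd e (W · a b c d)) x) a b f c d e =
        -(4 / ((n : ℝ) - 2)) *
          asym33 (fun a b f c d e =>
            gm η a c *
              ∑ i, η i *
                (pd f (pd e (pd i (L · b i d))) x
                  + pd f (pd e (pd i (L · d i b))) x)) a b f c d e :=
  first_integrability_condition_general n η W L hLC3 hEq5
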